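/- arXiv:2502.18958 — 7 statements merged into one kernel-verified Lean document; each statement's English description precedes it below -/
import Mathlib

section
/- For real numbers $a, b$ with $0 \le a < 1$ and $0 \le b < 1$, and any integer $i \ge 1$, one has $(1-a^i b^i)^2 (1-a^2)(1-b^2) \le (1-ab)^2 (1-a^{2i})(1-b^{2i})$. -/
/-! Writing `1 - x ^ i = (1 - x) * ∑ k < i, x ^ k` for `x = a b, a², b²` reduces the claim,
after cancelling the nonnegative factor `(1 - a b)² (1 - a²) (1 - b²)`, to Cauchy–Schwarz
for the vectors `(a ^ k)_{k < i}` and `(b ^ k)_{k < i}`. -/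

open Finset

theorem sq_geom_sum_mul_le {R : Type*} [CommRing R] [LinearOrder R] [IsStrictOrderedRing R]
    (a b : R) (n : ℕ) :
    (∑ k ∈ range n, (a * b) ^ k) ^ 2 ≤
      (∑ k ∈ range n, (a ^ 2) ^ k) * ∑ k ∈ range n, (b ^ 2) ^ k := by
  simpa only [mul_pow, pow_right_comm _ 2] using
    sum_mul_sq_le_sq_mul_sq (range n) (a ^ ·) (b ^ ·)

theorem stmt_0_general (a b : ℝ) (ha0 : 0 ≤ a) (ha1 : a < 1) (hb0 : 0 ≤ b) (hb1 : b < 1)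
    (i : ℕ) :
    (1 - a ^ i * b ^ i) ^ 2 * (1 - a ^ 2) * (1 - b ^ 2) ≤
      (1 - a * b) ^ 2 * (1 - a ^ (2 * i)) * (1 - b ^ (2 * i)) := by
  have hc : 0 ≤ (1 - a * b) ^ 2 * (1 - a ^ 2) * (1 - b ^ 2) :=
    mul_nonneg (mul_nonneg (sq_nonneg _) (by nlinarith)) (by nlinarith)
  rw [← mul_pow, pow_mul, pow_mul, ← mul_neg_geom_sum (a * b), ← mul_neg_geom_sum (a ^ 2),
    ← mul_neg_geom_sum (b ^ 2)]
  calc _ = (1 - a * b) ^ 2 * (1 - a ^ 2) * (1 - b ^ 2) * (∑ k ∈ range i, (a * b) ^ k) ^ 2 := by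
        ring
    _ ≤ (1 - a * b) ^ 2 * (1 - a ^ 2) * (1 - b ^ 2) *
          ((∑ k ∈ range i, (a ^ 2) ^ k) * ∑ k ∈ range i, (b ^ 2) ^ k) :=
        mul_le_mul_of_nonneg_left (sq_geom_sum_mul_le a b i) hc
    _ = _ := by ring

theorem stmt_0 (a b : ℝ) (ha0 : 0 ≤ a) (ha1 : a < 1) (hb0 : 0 ≤ b) (hb1 : b < 1)
    (i : ℕ) (hi : 1 ≤ i) :
    (1 - a ^ i * b ^ i) ^ 2 * (1 - a ^ 2) * (1 - b ^ 2) ≤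
      (1 - a * b) ^ 2 * (1 - a ^ (2 * i)) * (1 - b ^ (2 * i)) :=
  stmt_0_general a b ha0 ha1 hb0 hb1 i
end

section
/- For a real number $a$ with $0 \le a < 1$, the double series $\sum_{m \ge 0} \sum_{k \ge 1} \frac{(1-a^k) a^m}{(m+k)(m+k+1)}$ converges and its sum equals $1$. -/
/-!
Write the summand as `f₁ - f₂` with `f₁ (m, n) = a ^ m / ((m + n + 1) (m + n + 2))` and
`f₂ (m, n) = a ^ (m + n + 1) / ((m + n + 1) (m + n + 2))`, both nonnegative. For fixed `m` the sum
of `f₁` over `n` telescopes to `a ^ m / (m + 1)`; `f₂` depends only on `N = m + n`, and its `N + 1`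
values on the antidiagonal add up to `a ^ (N + 1) / (N + 2)`. So with `S = ∑ a ^ m / (m + 1)` the
two parts sum to `S` and `S - 1`.
-/

open Finset Filter Topology

lemma hasSum_sigma_of_nonneg {α : Type*} {β : α → Type*} {f : (Σ a, β a) → ℝ}
    (hf : ∀ x, 0 ≤ f x) {g : α → ℝ} {s : ℝ} (hfg : ∀ a, HasSum (fun b => f ⟨a, b⟩) (g a))
    (hg : HasSum g s) : HasSum f s := by
  have hf_summable : Summable f := (summable_sigma_of_nonneg hf).2
    ⟨fun a => (hfg a).summable, by simpa only [(hfg _).tsum_eq] using hg.summable⟩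
  exact (hf_summable.hasSum.sigma hfg).unique hg ▸ hf_summable.hasSum

lemma hasSum_prod_of_nonneg {α β : Type*} {f : α × β → ℝ} (hf : 0 ≤ f) {g : α → ℝ} {s : ℝ}
    (hfg : ∀ a, HasSum (fun b => f (a, b)) (g a)) (hg : HasSum g s) : HasSum f s :=
  (Equiv.sigmaEquivProd α β).hasSum_iff.mp (hasSum_sigma_of_nonneg (fun _ => hf _) hfg hg)

lemma hasSum_comp_add_of_nonneg {h : ℕ → ℝ} (hh : 0 ≤ h) {s : ℝ}
    (hs : HasSum (fun n => (n + 1) * h n) s) : HasSum (fun p : ℕ × ℕ => h (p.1 + p.2)) s := by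
  rw [← HasAntidiagonal.sigmaAntidiagonalEquivProd.hasSum_iff]
  refine hasSum_sigma_of_nonneg (fun _ => hh _) (fun n => ?_) hs
  have hfiber : ∑ p ∈ antidiagonal n, h (p.1 + p.2) = (n + 1) * h n := by
    rw [sum_congr rfl fun p hp => by rw [mem_antidiagonal.1 hp], sum_const,
      Nat.card_antidiagonal, nsmul_eq_mul]
    push_cast
    rfl
  exact hfiber ▸ (antidiagonal n).hasSum fun p => h (p.1 + p.2)

lemma hasSum_sub_succ_of_antitone {f : ℕ → ℝ} (hf : Antitone f) {l : ℝ}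
    (hl : Tendsto f atTop (𝓝 l)) : HasSum (fun n => f n - f (n + 1)) (f 0 - l) := by
  rw [hasSum_iff_tendsto_nat_of_nonneg fun n => sub_nonneg.2 (hf n.le_succ)]
  simpa only [sum_range_sub'] using hl.const_sub (f 0)

lemma hasSum_inv_mul_add_one {c : ℝ} (hc : 0 < c) :
    HasSum (fun n : ℕ => ((c + n) * (c + n + 1))⁻¹) c⁻¹ := by
  have hanti : Antitone fun n : ℕ => (c + n)⁻¹ := fun m n hmn =>
    inv_anti₀ (by positivity) (by gcongr)
  have hlim : Tendsto (fun n : ℕ => (c + n)⁻¹) atTop (𝓝 0) :=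
    tendsto_inv_atTop_zero.comp (tendsto_atTop_add_const_left _ _ tendsto_natCast_atTop_atTop)
  convert hasSum_sub_succ_of_antitone hanti hlim using 1
  · ext n
    have : 0 < c + n := by positivity
    push_cast
    field_simp
    ring
  · simp

lemma summable_pow_div_add_one {a : ℝ} (ha0 : 0 ≤ a) (ha1 : a < 1) :
    Summable fun m : ℕ => a ^ m / (m + 1) :=
  (summable_geometric_of_lt_one ha0 ha1).of_nonneg_of_le (fun m => by positivity)
    fun m => div_le_self (pow_nonneg ha0 m) (by simp)

theorem stmt_1 (a : ℝ) (ha0 : 0 ≤ a) (ha1 : a < 1) :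
    HasSum (fun p : ℕ × ℕ =>
      ((1 - a ^ (p.2 + 1)) * a ^ p.1) /
        ((p.1 + (p.2 + 1) : ℝ) * (p.1 + (p.2 + 1) + 1))) 1 := by
  obtain ⟨S, hS⟩ := summable_pow_div_add_one ha0 ha1
  have hf₁ : HasSum (fun p : ℕ × ℕ => a ^ p.1 / ((p.1 + p.2 + 1 : ℝ) * (p.1 + p.2 + 2))) S := by
    refine hasSum_prod_of_nonneg (fun p => by positivity) (fun m => ?_) hS
    refine ((hasSum_inv_mul_add_one (by positivity : (0 : ℝ) < m + 1)).mul_left (a ^ m)).congr_fun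
      fun n => ?_
    ring
  have hf₂ : HasSum (fun p : ℕ × ℕ =>
      a ^ (p.1 + p.2 + 1) / ((p.1 + p.2 + 1 : ℝ) * (p.1 + p.2 + 2))) (S - 1) := by
    have hshift := (hasSum_nat_add_iff' 1).2 hS
    rw [sum_range_one, pow_zero, Nat.cast_zero, zero_add, div_one] at hshift
    refine (hasSum_comp_add_of_nonneg (h := fun N : ℕ => a ^ (N + 1) / ((N + 1 : ℝ) * (N + 2)))
      (fun N => by positivity) (hshift.congr_fun fun N => ?_)).congr_fun fun p => ?_
    · push_cast
      field_simp
      ring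
    · push_cast
      ring
  have hf₁₂ := hf₁.sub hf₂
  rw [sub_sub_cancel] at hf₁₂
  exact hf₁₂.congr_fun fun p => by
    field_simp
    ring
end

section
/- For real numbers $a, b$ with $0 \le a, b < 1$ and any nonnegative integer $k$, one has $(1-a^2)(1-b^2) \left( \sum_{i=0}^{k} (k+1-i)(ab)^i \right)^2 \le (k+1)^2 (1-a^{2(k+1)})(1-b^{2(k+1)})$. -/
/-!
Weighted Cauchy–Schwarz with the weights `c i = k + 1 - i ∈ [0, k + 1]` gives
`(∑ c i (ab)^i)^2 ≤ (∑ c i a^(2i)) (∑ c i b^(2i)) ≤ (k+1)^2 (∑ a^(2i)) (∑ b^(2i))`,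
and multiplying by `(1 - a^2)(1 - b^2) ≥ 0` turns the two geometric sums into
`1 - a^(2(k+1))` and `1 - b^(2(k+1))`.
-/

open Finset

theorem sq_sum_mul_mul_pow_le {ι : Type*} (s : Finset ι) (e : ι → ℕ) {c : ι → ℝ}
    (hc : ∀ i ∈ s, 0 ≤ c i) (x y : ℝ) :
    (∑ i ∈ s, c i * (x * y) ^ e i) ^ 2 ≤
      (∑ i ∈ s, c i * (x ^ 2) ^ e i) * ∑ i ∈ s, c i * (y ^ 2) ^ e i :=
  sum_sq_le_sum_mul_sum_of_sq_le_mul s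
    (fun i hi => mul_nonneg (hc i hi) (pow_nonneg (sq_nonneg x) _))
    (fun i hi => mul_nonneg (hc i hi) (pow_nonneg (sq_nonneg y) _))
    (fun i _ => le_of_eq (by ring))

theorem sq_sum_mul_pow_le_sq_mul_geom_sum_mul_geom_sum {n : ℕ} {c : ℕ → ℝ} {M : ℝ}
    (hc : ∀ i ∈ range n, 0 ≤ c i ∧ c i ≤ M) (x y : ℝ) :
    (∑ i ∈ range n, c i * (x * y) ^ i) ^ 2 ≤
      M ^ 2 * (∑ i ∈ range n, (x ^ 2) ^ i) * ∑ i ∈ range n, (y ^ 2) ^ i := by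
  have weighted_le (z : ℝ) : ∑ i ∈ range n, c i * (z ^ 2) ^ i ≤ M * ∑ i ∈ range n, (z ^ 2) ^ i := by
    rw [mul_sum]
    exact sum_le_sum fun i hi => mul_le_mul_of_nonneg_right (hc i hi).2 (by positivity)
  have weighted_nonneg (z : ℝ) : 0 ≤ ∑ i ∈ range n, c i * (z ^ 2) ^ i :=
    sum_nonneg fun i hi => mul_nonneg (hc i hi).1 (by positivity)
  calc _ ≤ (∑ i ∈ range n, c i * (x ^ 2) ^ i) * ∑ i ∈ range n, c i * (y ^ 2) ^ i :=
        sq_sum_mul_mul_pow_le _ id (fun i hi => (hc i hi).1) x y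
    _ ≤ (M * ∑ i ∈ range n, (x ^ 2) ^ i) * (M * ∑ i ∈ range n, (y ^ 2) ^ i) :=
        mul_le_mul (weighted_le x) (weighted_le y) (weighted_nonneg y)
          ((weighted_nonneg x).trans (weighted_le x))
    _ = _ := by ring

theorem stmt_3 (a b : ℝ) (ha0 : 0 ≤ a) (ha1 : a < 1) (hb0 : 0 ≤ b) (hb1 : b < 1) (k : ℕ) :
    (1 - a ^ 2) * (1 - b ^ 2) *
        (∑ i ∈ Finset.range (k + 1), ((k + 1 - i : ℕ) : ℝ) * (a * b) ^ i) ^ 2 ≤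
      ((k : ℝ) + 1) ^ 2 * (1 - a ^ (2 * (k + 1))) * (1 - b ^ (2 * (k + 1))) := by
  have hweights : ∀ i ∈ range (k + 1), 0 ≤ ((k + 1 - i : ℕ) : ℝ) ∧ ((k + 1 - i : ℕ) : ℝ) ≤ k + 1 :=
    fun i _ => ⟨Nat.cast_nonneg _, by exact_mod_cast Nat.sub_le (k + 1) i⟩
  have hfactor : 0 ≤ (1 - a ^ 2) * (1 - b ^ 2) :=
    mul_nonneg (by nlinarith) (by nlinarith)
  calc _ ≤ (1 - a ^ 2) * (1 - b ^ 2) * (((k : ℝ) + 1) ^ 2 *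
          (∑ i ∈ range (k + 1), (a ^ 2) ^ i) * ∑ i ∈ range (k + 1), (b ^ 2) ^ i) :=
        mul_le_mul_of_nonneg_left
          (sq_sum_mul_pow_le_sq_mul_geom_sum_mul_geom_sum hweights a b) hfactor
    _ = ((k : ℝ) + 1) ^ 2 * ((1 - a ^ 2) * ∑ i ∈ range (k + 1), (a ^ 2) ^ i) *
          ((1 - b ^ 2) * ∑ i ∈ range (k + 1), (b ^ 2) ^ i) := by ring
    _ = _ := by rw [mul_neg_geom_sum, mul_neg_geom_sum, ← pow_mul, ← pow_mul]
end

section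
/- For real numbers $a, b$ with $0 \le a, b < 1$, the double series $\sum_{m \ge 0, k \ge 1} \frac{(a^{2m}+b^{2m})(1-a^{2k})(1-b^{2k})}{(m+k)(m+k+1)}$ is at most $2$. -/
/-!
Bound `(1 - a^{2k})(1 - b^{2k})` by each factor separately, which splits the series into two
series of the form `∑ c^m (1 - c^k) / ((m+k)(m+k+1))` with `c = a²` and `c = b²`. Each of these
sums to `1`: on the diagonal `m + k = n + 1` the numerators add up to `∑_{m ≤ n} c^m - (n+1) c^{n+1}`,
and the partial sums over `n < N` telescope to `1 - (∑_{m < N} c^m + c^N) / (N + 1)`.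
-/

open Finset

section OrderedRing

variable {R : Type*} [CommRing R] [LinearOrder R] [IsStrictOrderedRing R]

lemma add_mul_one_sub_mul_one_sub_le {x y u v : R} (hx : 0 ≤ x) (hy : 0 ≤ y)
    (hu₀ : 0 ≤ u) (hu₁ : u ≤ 1) (hv₀ : 0 ≤ v) (hv₁ : v ≤ 1) :
    (x + y) * (1 - u) * (1 - v) ≤ x * (1 - u) + y * (1 - v) := by
  nlinarith [mul_nonneg hx (mul_nonneg (sub_nonneg.mpr hu₁) hv₀),
    mul_nonneg hy (mul_nonneg hu₀ (sub_nonneg.mpr hv₁))]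

end OrderedRing

-- `p = (m, k - 1)`, so that `k ≥ 1` ranges over `ℕ`, as in the statement.
noncomputable def diagTerm (c : ℝ) (p : ℕ × ℕ) : ℝ :=
  c ^ p.1 * (1 - c ^ (p.2 + 1)) / ((p.1 + (p.2 + 1) : ℝ) * (p.1 + (p.2 + 1) + 1))

lemma diagTerm_nonneg {c : ℝ} (hc₀ : 0 ≤ c) (hc₁ : c ≤ 1) (p : ℕ × ℕ) : 0 ≤ diagTerm c p :=
  div_nonneg (mul_nonneg (pow_nonneg hc₀ _) (sub_nonneg.mpr (pow_le_one₀ hc₀ hc₁)))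
    (by positivity)

lemma sum_antidiagonal_diagTerm (c : ℝ) (n : ℕ) :
    ∑ p ∈ antidiagonal n, diagTerm c p =
      ((∑ m ∈ range (n + 1), c ^ m) - (n + 1) * c ^ (n + 1)) / ((n + 1 : ℝ) * (n + 2)) := by
  rw [Nat.sum_antidiagonal_eq_sum_range_succ_mk]
  have hterm : ∀ m ∈ range (n + 1),
      diagTerm c (m, n - m) = (c ^ m - c ^ (n + 1)) / ((n + 1 : ℝ) * (n + 2)) := by
    intro m hm
    have hmn : m + (n - m) = n := Nat.add_sub_cancel' (Nat.lt_succ_iff.mp (mem_range.mp hm))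
    have hcast : (m : ℝ) + ((n - m : ℕ) + 1) = n + 1 := by
      rw [← add_assoc, ← Nat.cast_add, hmn]
    rw [diagTerm, hcast, mul_sub, mul_one, ← pow_add, ← add_assoc, hmn]
    ring_nf
  rw [sum_congr rfl hterm, ← sum_div, sum_sub_distrib, sum_const, card_range, nsmul_eq_mul]
  push_cast
  ring

lemma sum_range_sum_antidiagonal_diagTerm (c : ℝ) (N : ℕ) :
    ∑ n ∈ range N, ∑ p ∈ antidiagonal n, diagTerm c p =
      1 - ((∑ m ∈ range N, c ^ m) + c ^ N) / (N + 1) := by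
  induction N with
  | zero => simp
  | succ N ih =>
    rw [sum_range_succ, ih, sum_antidiagonal_diagTerm, sum_range_succ]
    push_cast
    field_simp
    ring

lemma sum_diagTerm_le_one {c : ℝ} (hc₀ : 0 ≤ c) (hc₁ : c ≤ 1) (s : Finset (ℕ × ℕ)) :
    ∑ p ∈ s, diagTerm c p ≤ 1 := by
  set N := (s.sup fun p => p.1 + p.2) + 1
  have hsub : s ⊆ (range N).biUnion antidiagonal := fun p hp =>
    mem_biUnion.mpr ⟨p.1 + p.2,
      mem_range.mpr (Nat.lt_succ_of_le (le_sup (f := fun p => p.1 + p.2) hp)), by simp⟩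
  have hdisj : (range N : Set ℕ).PairwiseDisjoint antidiagonal := by
    intro m _ n _ hmn
    simp only [Function.onFun, disjoint_left, HasAntidiagonal.mem_antidiagonal]
    exact fun _ hm hn => hmn (hm.symm.trans hn)
  calc ∑ p ∈ s, diagTerm c p
      ≤ ∑ p ∈ (range N).biUnion antidiagonal, diagTerm c p :=
        sum_le_sum_of_subset_of_nonneg hsub fun p _ _ => diagTerm_nonneg hc₀ hc₁ p
    _ = 1 - ((∑ m ∈ range N, c ^ m) + c ^ N) / (N + 1) := by
        rw [sum_biUnion hdisj, sum_range_sum_antidiagonal_diagTerm]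
    _ ≤ 1 := by
        have : 0 ≤ ((∑ m ∈ range N, c ^ m) + c ^ N) / (N + 1) := by
          have := sum_nonneg fun m (_ : m ∈ range N) => pow_nonneg hc₀ m
          positivity
        linarith

theorem stmt_4 (a b : ℝ) (ha0 : 0 ≤ a) (ha1 : a < 1) (hb0 : 0 ≤ b) (hb1 : b < 1) :
    ∑' p : ℕ × ℕ,
        ((a ^ (2 * p.1) + b ^ (2 * p.1)) * (1 - a ^ (2 * (p.2 + 1))) *
            (1 - b ^ (2 * (p.2 + 1)))) /
          ((p.1 + (p.2 + 1) : ℝ) * (p.1 + (p.2 + 1) + 1)) ≤ 2 := by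
  have ha : a ^ 2 ≤ 1 := pow_le_one₀ ha0 ha1.le
  have hb : b ^ 2 ≤ 1 := pow_le_one₀ hb0 hb1.le
  have hterm : ∀ p : ℕ × ℕ,
      ((a ^ (2 * p.1) + b ^ (2 * p.1)) * (1 - a ^ (2 * (p.2 + 1))) *
          (1 - b ^ (2 * (p.2 + 1)))) / ((p.1 + (p.2 + 1) : ℝ) * (p.1 + (p.2 + 1) + 1)) ≤
        diagTerm (a ^ 2) p + diagTerm (b ^ 2) p := by
    intro p
    simp only [diagTerm, ← add_div, ← pow_mul]
    gcongr
    exact add_mul_one_sub_mul_one_sub_le (by positivity) (by positivity) (by positivity)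
      (pow_le_one₀ ha0 ha1.le) (by positivity) (pow_le_one₀ hb0 hb1.le)
  refine tsum_le_of_sum_le' zero_le_two fun s => ?_
  calc _ ≤ ∑ p ∈ s, (diagTerm (a ^ 2) p + diagTerm (b ^ 2) p) := sum_le_sum fun p _ => hterm p
    _ ≤ 1 + 1 := by
        rw [sum_add_distrib]
        exact add_le_add (sum_diagTerm_le_one (sq_nonneg a) ha s)
          (sum_diagTerm_le_one (sq_nonneg b) hb s)
    _ = 2 := one_add_one_eq_two
end

section
/- Let $\theta : \mathbb{D} \to \mathbb{C}$ be an analytic function with $|\theta(z)| \le 1$ for all $z$ in the open unit disk $\mathbb{D}$. Then the de Branges–Rovnyak kernel $R(z, \lambda) = \frac{1 - \overline{\theta(\lambda)} \theta(z)}{1 - \bar{\lambda} z}$ is a positive semidefinite kernel on $\mathbb{D}$. -/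
/-!
For `r < 1` let `k_a(w) = (1 - ā w / r²)⁻¹` be the Szegő kernel of the disc of radius `r`.
On the circle `|w| = r` one has `conj (k_a w) = w / (w - a)`, so Cauchy's formula says that `k_a`
reproduces point values for the circle average `⟨f, g⟩ = ⨍ f ḡ`. With `V = ∑ cⱼ k_{zⱼ}` and
`H = ∑ cⱼ conj (θ zⱼ) k_{zⱼ}`, the quadratic form of the kernel (with `r²` in the denominator)
becomes `‖V‖² - ‖H‖²`, and `‖H‖² = ⟨θ H, V⟩ ≤ (‖H‖² + ‖V‖²) / 2` because `|θ| ≤ 1` on the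
circle. Letting `r → 1` gives the theorem.
-/

open ComplexConjugate ComplexOrder

/-- A positive semidefinite kernel on a set `Ω`: Hermitian, and every finite
Gram quadratic form is nonnegative (as a complex number, i.e. real and `≥ 0`). -/
def IsPSDKernel {Ω : Type*} (K : Ω → Ω → ℂ) : Prop :=
  (∀ x y, K x y = conj (K y x)) ∧
    ∀ (m : ℕ) (x : Fin m → Ω) (c : Fin m → ℂ),
      0 ≤ ∑ i, ∑ j, conj (c i) * c j * K (x i) (x j)

open Metric Real Filter Topology

noncomputable def szegoKernel (r : ℝ) (a w : ℂ) : ℂ := (1 - conj a * w / (r : ℂ) ^ 2)⁻¹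

theorem conj_mul_ne_sq {r : ℝ} {a w : ℂ} (ha : ‖a‖ < r) (hw : ‖w‖ ≤ r) :
    conj a * w ≠ (r : ℂ) ^ 2 := by
  intro h
  have hlt : ‖conj a * w‖ < r ^ 2 := by
    rw [norm_mul, RCLike.norm_conj, sq]
    exact mul_lt_mul_of_lt_of_le_of_nonneg_of_pos ha hw (norm_nonneg _)
      ((norm_nonneg a).trans_lt ha)
  rw [h, norm_pow, Complex.norm_real, Real.norm_eq_abs, sq_abs] at hlt
  exact hlt.false

theorem one_sub_conj_mul_div_sq_ne_zero {r : ℝ} {a w : ℂ} (ha : ‖a‖ < r) (hw : ‖w‖ ≤ r) :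
    1 - conj a * w / (r : ℂ) ^ 2 ≠ 0 := by
  have hr : (r : ℂ) ^ 2 ≠ 0 := by
    have := (norm_nonneg a).trans_lt ha
    exact pow_ne_zero 2 (Complex.ofReal_ne_zero.2 this.ne')
  rw [sub_ne_zero, ne_comm, Ne, div_eq_one_iff_eq hr]
  exact conj_mul_ne_sq ha hw

theorem differentiableOn_szegoKernel {r : ℝ} {a : ℂ} (ha : a ∈ ball (0 : ℂ) r) :
    DifferentiableOn ℂ (szegoKernel r a) (closedBall 0 r) := by
  refine DifferentiableOn.inv (by fun_prop) fun w hw => ?_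
  exact one_sub_conj_mul_div_sq_ne_zero (mem_ball_zero_iff.1 ha) (mem_closedBall_zero_iff.1 hw)

theorem conj_szegoKernel_of_mem_sphere {r : ℝ} (hr : r ≠ 0) (a : ℂ) {w : ℂ}
    (hw : w ∈ sphere (0 : ℂ) r) : conj (szegoKernel r a w) = w / (w - a) := by
  rw [mem_sphere_zero_iff_norm] at hw
  have hw0 : w ≠ 0 := by rintro rfl; simp [eq_comm, hr] at hw
  have hconj : conj w = (r : ℂ) ^ 2 / w := by
    rw [eq_div_iff hw0, mul_comm, Complex.mul_conj', hw]
  simp only [szegoKernel, map_inv₀, map_sub, map_one, map_div₀, map_mul, Complex.conj_conj,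
    map_pow, Complex.conj_ofReal, hconj]
  field_simp

theorem circleAverage_mul_conj_szegoKernel {r : ℝ} (hr : 0 < r) {f : ℂ → ℂ}
    (hf : DifferentiableOn ℂ f (closedBall 0 r)) {a : ℂ} (ha : a ∈ ball (0 : ℂ) r) :
    circleAverage (fun w => f w * conj (szegoKernel r a w)) 0 r = f a := by
  have hcongr : Set.EqOn (fun w => (w - 0)⁻¹ • (f w * conj (szegoKernel r a w)))
      (fun w => (w - a)⁻¹ • f w) (sphere 0 r) := fun w hw => by
    have hw0 : w ≠ 0 := ne_of_mem_sphere hw hr.ne'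
    simp only [conj_szegoKernel_of_mem_sphere hr.ne' a hw, smul_eq_mul, sub_zero]
    field_simp
  rw [circleAverage_eq_circleIntegral hr.ne', circleIntegral.integral_congr hr.le hcongr,
    hf.circleIntegral_sub_inv_smul ha, smul_smul, inv_mul_cancel₀ (by simp [pi_ne_zero]),
    one_smul]

theorem circleAverage_mul_conj_sum_szegoKernel {r : ℝ} (hr : 0 < r) {f : ℂ → ℂ}
    (hf : DifferentiableOn ℂ f (closedBall 0 r)) {ι : Type*} [Fintype ι] {z : ι → ℂ}
    (hz : ∀ i, z i ∈ ball (0 : ℂ) r) (c : ι → ℂ) :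
    circleAverage (fun w => f w * conj (∑ i, c i * szegoKernel r (z i) w)) 0 r
      = ∑ i, conj (c i) * f (z i) := by
  have hint : ∀ i ∈ Finset.univ, CircleIntegrable
      (fun w => conj (c i) • (f w * conj (szegoKernel r (z i) w))) 0 r := fun i _ => by
    have hk := (differentiableOn_szegoKernel (hz i)).continuousOn
    have hf' := hf.continuousOn
    exact ContinuousOn.circleIntegrable hr.le <|
      ContinuousOn.mono (by fun_prop) sphere_subset_closedBall
  calc circleAverage (fun w => f w * conj (∑ i, c i * szegoKernel r (z i) w)) 0 r
      = circleAverage (fun w => ∑ i, conj (c i) • (f w * conj (szegoKernel r (z i) w))) 0 r := by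
        congr 1; ext w
        simp only [map_sum, map_mul, Finset.mul_sum, smul_eq_mul]
        exact Finset.sum_congr rfl fun i _ => by ring
    _ = ∑ i, conj (c i) * f (z i) := by
        rw [circleAverage_fun_sum hint]
        refine Finset.sum_congr rfl fun i _ => ?_
        rw [circleAverage_fun_smul, circleAverage_mul_conj_szegoKernel hr hf (hz i), smul_eq_mul]

theorem circleAverage_mul_conj_self (f : ℂ → ℂ) (c : ℂ) (R : ℝ) :
    circleAverage (fun w => f w * conj (f w)) c R
      = ((circleAverage (fun w => ‖f w‖ ^ 2) c R : ℝ) : ℂ) := by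
  simp only [circleAverage_def, Complex.mul_conj', ← Complex.ofReal_pow,
    intervalIntegral.integral_ofReal, Complex.real_smul, smul_eq_mul, Complex.ofReal_mul]

theorem circleAverage_norm_sq_le_of_eq {c : ℂ} {R : ℝ} {θ h v : ℂ → ℂ}
    (hθ : ContinuousOn θ (sphere c |R|)) (hh : ContinuousOn h (sphere c |R|))
    (hv : ContinuousOn v (sphere c |R|)) (hθ1 : ∀ w ∈ sphere c |R|, ‖θ w‖ ≤ 1)
    (heq : ((circleAverage (fun w => ‖h w‖ ^ 2) c R : ℝ) : ℂ)
      = circleAverage (fun w => θ w * h w * conj (v w)) c R) :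
    circleAverage (fun w => ‖h w‖ ^ 2) c R ≤ circleAverage (fun w => ‖v w‖ ^ 2) c R := by
  have hv' : ContinuousOn (fun w => conj (v w)) (sphere c |R|) :=
    Complex.continuous_conj.comp_continuousOn hv
  have hh2 : CircleIntegrable (fun w => ‖h w‖ ^ 2) c R := (hh.norm.pow 2).circleIntegrable'
  have hv2 : CircleIntegrable (fun w => ‖v w‖ ^ 2) c R := (hv.norm.pow 2).circleIntegrable'
  have hre : circleAverage (fun w => ‖h w‖ ^ 2) c R
      = circleAverage (fun w => (θ w * h w * conj (v w)).re) c R := by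
    rw [← Complex.ofReal_re (circleAverage _ c R), heq]
    exact (Complex.reCLM.circleAverage_comp_comm ((hθ.mul hh).mul hv').circleIntegrable').symm
  have hpt : ∀ w ∈ sphere c |R|,
      (θ w * h w * conj (v w)).re ≤ (2 : ℝ)⁻¹ • (‖h w‖ ^ 2 + ‖v w‖ ^ 2) := fun w hw => by
    have hθh : ‖θ w‖ * ‖h w‖ ≤ ‖h w‖ := mul_le_of_le_one_left (norm_nonneg _) (hθ1 w hw)
    calc (θ w * h w * conj (v w)).re ≤ ‖θ w‖ * ‖h w‖ * ‖v w‖ :=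
          (Complex.re_le_norm _).trans_eq (by simp only [norm_mul, RCLike.norm_conj])
      _ ≤ ‖h w‖ * ‖v w‖ := mul_le_mul_of_nonneg_right hθh (norm_nonneg _)
      _ ≤ (2 : ℝ)⁻¹ • (‖h w‖ ^ 2 + ‖v w‖ ^ 2) := by
          rw [smul_eq_mul]; nlinarith [sq_nonneg (‖h w‖ - ‖v w‖)]
  have hmono : circleAverage (fun w => (θ w * h w * conj (v w)).re) c R
      ≤ circleAverage (fun w => (2 : ℝ)⁻¹ • (‖h w‖ ^ 2 + ‖v w‖ ^ 2)) c R :=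
    circleAverage_mono
      (Complex.continuous_re.comp_continuousOn ((hθ.mul hh).mul hv')).circleIntegrable'
      (hh2.add hv2).const_smul hpt
  rw [← hre, circleAverage_fun_smul, circleAverage_fun_add hh2 hv2, smul_eq_mul] at hmono
  linarith

theorem deBranges_quadForm_nonneg {r : ℝ} (hr : 0 < r) {θ : ℂ → ℂ}
    (hθ : DifferentiableOn ℂ θ (closedBall 0 r)) (hθ1 : ∀ w ∈ sphere (0 : ℂ) r, ‖θ w‖ ≤ 1)
    {ι : Type*} [Fintype ι] {z : ι → ℂ} (hz : ∀ i, z i ∈ ball (0 : ℂ) r) (c : ι → ℂ) :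
    0 ≤ ∑ i, ∑ j, conj (c i) * c j *
      ((1 - conj (θ (z j)) * θ (z i)) * szegoKernel r (z j) (z i)) := by
  set d : ι → ℂ := fun i => c i * conj (θ (z i))
  set V : ℂ → ℂ := fun w => ∑ j, c j * szegoKernel r (z j) w
  set H : ℂ → ℂ := fun w => ∑ j, d j * szegoKernel r (z j) w
  have hdiff : ∀ e : ι → ℂ,
      DifferentiableOn ℂ (fun w => ∑ j, e j * szegoKernel r (z j) w) (closedBall 0 r) :=
    fun e => DifferentiableOn.fun_sum fun j _ =>
      (differentiableOn_const _).mul (differentiableOn_szegoKernel (hz j))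
  have hVV : ((circleAverage (fun w => ‖V w‖ ^ 2) 0 r : ℝ) : ℂ)
      = ∑ i, conj (c i) * V (z i) := by
    rw [← circleAverage_mul_conj_self]
    exact circleAverage_mul_conj_sum_szegoKernel hr (hdiff c) hz c
  have hHH : ((circleAverage (fun w => ‖H w‖ ^ 2) 0 r : ℝ) : ℂ)
      = ∑ i, conj (d i) * H (z i) := by
    rw [← circleAverage_mul_conj_self]
    exact circleAverage_mul_conj_sum_szegoKernel hr (hdiff d) hz d
  have hθHV : circleAverage (fun w => θ w * H w * conj (V w)) 0 r
      = ∑ i, conj (c i) * (θ (z i) * H (z i)) :=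
    circleAverage_mul_conj_sum_szegoKernel hr (hθ.mul (hdiff d)) hz c
  have hsphere : sphere (0 : ℂ) |r| ⊆ closedBall 0 r := by
    rw [abs_of_pos hr]; exact sphere_subset_closedBall
  have hle :
      circleAverage (fun w => ‖H w‖ ^ 2) 0 r ≤ circleAverage (fun w => ‖V w‖ ^ 2) 0 r := by
    refine circleAverage_norm_sq_le_of_eq (θ := θ) (hθ.continuousOn.mono hsphere)
      ((hdiff d).continuousOn.mono hsphere) ((hdiff c).continuousOn.mono hsphere)
      (by rwa [abs_of_pos hr]) ?_
    rw [hHH, hθHV]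
    refine Finset.sum_congr rfl fun i _ => ?_
    simp only [d, map_mul, Complex.conj_conj]
    ring
  have hQ : ∑ i, ∑ j, conj (c i) * c j *
      ((1 - conj (θ (z j)) * θ (z i)) * szegoKernel r (z j) (z i))
      = ∑ i, conj (c i) * V (z i) - ∑ i, conj (d i) * H (z i) := by
    simp only [V, H, d, Finset.mul_sum, ← Finset.sum_sub_distrib, map_mul, Complex.conj_conj]
    refine Finset.sum_congr rfl fun i _ => Finset.sum_congr rfl fun j _ => ?_
    ring
  rw [hQ, ← hVV, ← hHH, sub_nonneg, Complex.real_le_real]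
  exact hle

theorem tendsto_szegoKernel_one {a w : ℂ} (h : conj a * w ≠ 1) :
    Tendsto (fun r : ℝ => szegoKernel r a w) (𝓝 1) (𝓝 (1 - conj a * w)⁻¹) := by
  have hc : ContinuousAt (fun r : ℝ => szegoKernel r a w) 1 :=
    ContinuousAt.inv₀ (by fun_prop (disch := simp)) (by simpa using sub_ne_zero.2 h.symm)
  simpa [szegoKernel] using hc.tendsto

theorem stmt_8 (θ : ℂ → ℂ)
    (hθa : DifferentiableOn ℂ θ (Metric.ball (0 : ℂ) 1))
    (hθb : ∀ z ∈ Metric.ball (0 : ℂ) 1, ‖θ z‖ ≤ 1) :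
    IsPSDKernel (fun z l : Metric.ball (0 : ℂ) 1 =>
      (1 - conj (θ l) * θ z) / (1 - conj (l : ℂ) * z)) := by
  refine ⟨fun z l => ?_, fun m x c => ?_⟩
  · simp only [map_div₀, map_sub, map_one, map_mul, Complex.conj_conj]
    ring
  have hx : ∀ i, ‖(x i : ℂ)‖ < 1 := fun i => mem_ball_zero_iff.1 (x i).2
  have hlim : Tendsto (fun r : ℝ => ∑ i, ∑ j, conj (c i) * c j *
      ((1 - conj (θ (x j)) * θ (x i)) * szegoKernel r (x j) (x i))) (𝓝[<] 1)
      (𝓝 (∑ i, ∑ j, conj (c i) * c j *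
        ((1 - conj (θ (x j)) * θ (x i)) / (1 - conj (x j : ℂ) * x i)))) := by
    simp only [div_eq_mul_inv]
    refine tendsto_nhdsWithin_of_tendsto_nhds (tendsto_finsetSum _ fun i _ =>
      tendsto_finsetSum _ fun j _ => ((tendsto_szegoKernel_one ?_).const_mul _).const_mul _)
    simpa using conj_mul_ne_sq (hx j) (hx i).le
  refine ge_of_tendsto hlim ?_
  filter_upwards [Ioo_mem_nhdsLT zero_lt_one,
    eventually_all.2 fun i => Ioo_mem_nhdsLT (hx i)] with r hr hxr
  exact deBranges_quadForm_nonneg hr.1 (hθa.mono (closedBall_subset_ball hr.2))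
    (fun w hw => hθb w (sphere_subset_ball hr.2 hw)) (fun i => mem_ball_zero_iff.2 (hxr i).1) c
end

section
/- For the submodule $M = [z-w]$ of $H^2(\mathbb{D}^2)$ and for all $(a,b) \in \mathbb{D}^2$, define $\Sigma_1(a,b) = (1-|a|^2)(1-|b|^2) \sum_{k,l \ge 0} \left| \left\langle \frac{w \phi_k}{1-\bar{b}w}, \frac{z \psi_l}{1-\bar{a}z} \right\rangle \right|^2$, where $\phi_n(z,w) = \frac{1}{\sqrt{n+2}}(z e_n(z,w) - \sqrt{n+1} w^{n+1})$, $\psi_n(z,w) = \phi_n(w,z)$, and $e_n(z,w) = \frac{1}{\sqrt{n+1}} \sum_{i=0}^{n} z^{n-i} w^i$. Then $\Sigma_1(a,b) \le 2$ for all $(a,b) \in \mathbb{D}^2$. -/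
open ComplexConjugate

/- We model `H²(𝔻²)` by Taylor coefficients: a function `∑ c (i,j) zⁱ wʲ` is
represented by `c : ℕ × ℕ → ℂ`, and inner products are computed coefficientwise:
`⟨f, g⟩ = ∑ f (i,j) * conj (g (i,j))`. -/

/-- Coefficients of `e n (z,w) = (1/√(n+1)) ∑_{i=0}^n z^{n-i} w^i`. -/
noncomputable def eC (n : ℕ) : ℕ × ℕ → ℂ := fun p =>
  if p.1 + p.2 = n then (1 / Real.sqrt (n + 1) : ℝ) else 0

/-- Coefficients of `φ n = (z e n - √(n+1) w^{n+1}) / √(n+2)`,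
an orthonormal basis of `M ⊖ zM` for `M = [z-w]`. -/
noncomputable def φC (n : ℕ) : ℕ × ℕ → ℂ := fun p =>
  ((1 / Real.sqrt (n + 2) : ℝ) : ℂ) *
    ((if p.1 = 0 then 0 else eC n (p.1 - 1, p.2)) -
      ((Real.sqrt (n + 1) : ℝ) : ℂ) * (if p.1 = 0 ∧ p.2 = n + 1 then 1 else 0))

/-- Coefficients of `ψ n (z,w) = φ n (w,z)`,
an orthonormal basis of `M ⊖ wM` for `M = [z-w]`. -/
noncomputable def ψC (n : ℕ) : ℕ × ℕ → ℂ := fun p => φC n (p.2, p.1)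

/-- Coefficients of `w · φ k / (1 - b̄ w)`. -/
noncomputable def wSide (b : ℂ) (k : ℕ) : ℕ × ℕ → ℂ := fun p =>
  ∑ j ∈ Finset.range p.2, φC k (p.1, j) * (conj b) ^ (p.2 - 1 - j)

/-- Coefficients of `z · ψ l / (1 - ā z)`. -/
noncomputable def zSide (a : ℂ) (l : ℕ) : ℕ × ℕ → ℂ := fun p =>
  ∑ i ∈ Finset.range p.1, ψC l (i, p.2) * (conj a) ^ (p.1 - 1 - i)

/-- The numerical invariant function `Σ₁(a,b)` of the submodule `M = [z-w]`:
`Σ₁(a,b) = (1-|a|²)(1-|b|²) ∑_{k,l} |⟨wφ_k/(1-b̄w), zψ_l/(1-āz)⟩|²`. -/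
noncomputable def Sigma1 (a b : ℂ) : ℝ :=
  (1 - ‖a‖ ^ 2) * (1 - ‖b‖ ^ 2) *
    ∑' q : ℕ × ℕ, ‖∑' p : ℕ × ℕ, wSide b q.1 p * conj (zSide a q.2 p)‖ ^ 2


/- In coordinates, `⟨wφ_k/(1-b̄w), zψ_l/(1-āz)⟩ = c_k c_l ∑ b̄^(i+j-k) a^(i+j-l)`, summed over
`i ≤ k`, `j ≤ l`, `i + j ≥ max k l`, where `c_k = ((k+1)(k+2))^(-1/2)`. For `l ≤ k` this is
`c_k c_l a^(k-l) S_l(a b̄)` with `S_l(x) = ∑_{n ≤ l} ∑_{e ≤ n} x^e`, so its square is at most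
`|a|^(2(k-l)) y_l²` with `y_l = c_l² S_l(|a b|)`, and symmetrically for `k ≤ l`. Summing the
geometric factors bounds `Σ₁` by `(2 - |a|² - |b|²) ∑ y_l²`, and `∑ y_l² ≤ 1/(1 - |a b|)` because
`y_l ≤ 1/2` and `(l+2) y_l ≤ 1/(1 - |a b|)`. Finally `2 - |a|² - |b|² ≤ 2 (1 - |a b|)`. -/

open Finset

noncomputable def phiCoeff (k : ℕ) : ℝ := 1 / √((k : ℝ) + 2) * (1 / √((k : ℝ) + 1))

lemma phiCoeff_nonneg (k : ℕ) : 0 ≤ phiCoeff k := by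
  unfold phiCoeff
  positivity

lemma phiCoeff_sq (k : ℕ) : phiCoeff k ^ 2 = 1 / (((k : ℝ) + 1) * ((k : ℝ) + 2)) := by
  rw [phiCoeff, mul_pow, div_pow, div_pow, Real.sq_sqrt (by positivity),
    Real.sq_sqrt (by positivity), one_pow, div_mul_div_comm, one_mul, mul_comm]

lemma phiCoeff_antitone : Antitone phiCoeff := by
  intro l k h
  have : (l : ℝ) ≤ k := by exact_mod_cast h
  unfold phiCoeff
  gcongr

lemma phiC_succ (k i j : ℕ) :
    φC k (i + 1, j) = if i + j = k then (phiCoeff k : ℂ) else 0 := by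
  simp only [φC, eC, phiCoeff, Nat.add_sub_cancel, Nat.add_one_ne_zero, false_and, if_false,
    mul_zero, sub_zero]
  split_ifs <;> push_cast <;> ring

lemma zSide_apply (a : ℂ) (l i j : ℕ) : zSide a l (i, j) = wSide a l (j, i) := rfl

lemma wSide_zero_right (b : ℂ) (k i : ℕ) : wSide b k (i, 0) = 0 := by simp [wSide]

lemma wSide_succ_of_lt (b : ℂ) {k i : ℕ} (j : ℕ) (h : k < i) : wSide b k (i + 1, j) = 0 :=
  sum_eq_zero fun j' _ => by rw [phiC_succ, if_neg (by omega), zero_mul]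

lemma wSide_succ_succ (b : ℂ) {k i : ℕ} (j : ℕ) (h : i ≤ k) :
    wSide b k (i + 1, j + 1) =
      if k ≤ i + j then (phiCoeff k : ℂ) * conj b ^ (i + j - k) else 0 := by
  have hterm : ∀ j' ∈ range (j + 1), φC k (i + 1, j') * conj b ^ (j + 1 - 1 - j') =
      if k - i = j' then (phiCoeff k : ℂ) * conj b ^ (i + j - k) else 0 := by
    intro j' _
    rw [phiC_succ]
    by_cases hj' : i + j' = k
    · rw [if_pos hj', if_pos (by omega), show j + 1 - 1 - j' = i + j - k by omega]
    · rw [if_neg hj', if_neg (by omega), zero_mul]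
  rw [wSide, sum_congr rfl hterm, sum_ite_eq]
  exact if_congr (by rw [mem_range]; omega) rfl rfl

section Kernel

variable {R : Type*} [CommSemiring R]

def innerKernel (x y : R) (k l : ℕ) : R :=
  ∑ i ∈ range (k + 1), ∑ j ∈ range (l + 1),
    if max k l ≤ i + j then y ^ (i + j - k) * x ^ (i + j - l) else 0

def doubleGeomSum (x : R) (m : ℕ) : R :=
  ∑ n ∈ range (m + 1), ∑ e ∈ range (n + 1), x ^ e

lemma innerKernel_comm (x y : R) (k l : ℕ) : innerKernel x y k l = innerKernel y x l k := by
  rw [innerKernel, innerKernel, sum_comm]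
  refine sum_congr rfl fun j _ => sum_congr rfl fun i _ => ?_
  rw [max_comm, add_comm j i, mul_comm]

lemma sum_range_ite_le_add {M : Type*} [AddCommMonoid M] (f : ℕ → M) {j k : ℕ} (h : j ≤ k) :
    ∑ i ∈ range (k + 1), (if k ≤ i + j then f (i + j - k) else 0) =
      ∑ e ∈ range (j + 1), f e := by
  rw [← sum_range_reflect _ (k + 1), ← sum_range_reflect f (j + 1),
    ← sum_subset (range_subset_range.2 (by omega : j + 1 ≤ k + 1))]
  · refine sum_congr rfl fun i hi => ?_
    rw [mem_range] at hi
    rw [if_pos (by omega)]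
    congr 1
    omega
  · intro i hik hij
    rw [mem_range] at hik hij
    rw [if_neg (by omega)]

lemma innerKernel_of_le (x y : R) {k l : ℕ} (h : l ≤ k) :
    innerKernel x y k l = x ^ (k - l) * doubleGeomSum (x * y) l := by
  rw [innerKernel, doubleGeomSum, sum_comm, mul_sum, max_eq_left h]
  refine sum_congr rfl fun j hj => ?_
  rw [mem_range] at hj
  rw [← sum_range_ite_le_add (fun e => (x * y) ^ e) (by omega : j ≤ k), mul_sum]
  refine sum_congr rfl fun i _ => ?_
  split_ifs
  · rw [mul_pow, show i + j - l = k - l + (i + j - k) by omega, pow_add]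
    ring
  · rw [mul_zero]

end Kernel

lemma norm_doubleGeomSum_le {R : Type*} [SeminormedCommRing R] [NormOneClass R] (z : R)
    (m : ℕ) : ‖doubleGeomSum z m‖ ≤ doubleGeomSum ‖z‖ m :=
  (norm_sum_le _ _).trans <| sum_le_sum fun _ _ =>
    (norm_sum_le _ _).trans <| sum_le_sum fun e _ => norm_pow_le z e

lemma doubleGeomSum_nonneg {x : ℝ} (hx : 0 ≤ x) (m : ℕ) : 0 ≤ doubleGeomSum x m := by
  unfold doubleGeomSum
  positivity

lemma doubleGeomSum_le_of_le_one {x : ℝ} (hx0 : 0 ≤ x) (hx1 : x ≤ 1) (m : ℕ) :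
    doubleGeomSum x m ≤ ((m : ℝ) + 1) * ((m : ℝ) + 2) / 2 := by
  calc doubleGeomSum x m ≤ ∑ n ∈ range (m + 1), ((n : ℝ) + 1) :=
        sum_le_sum fun n _ =>
          (sum_le_sum fun e _ => pow_le_one₀ hx0 hx1).trans (by simp)
    _ = ((m : ℝ) + 1) * ((m : ℝ) + 2) / 2 := by
        induction m with
        | zero => norm_num
        | succ m ih => rw [sum_range_succ, ih]; push_cast; ring

lemma doubleGeomSum_le_of_lt_one {x : ℝ} (hx0 : 0 ≤ x) (hx1 : x < 1) (m : ℕ) :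
    doubleGeomSum x m ≤ ((m : ℝ) + 1) / (1 - x) := by
  calc doubleGeomSum x m ≤ ∑ n ∈ range (m + 1), 1 / (1 - x) :=
        sum_le_sum fun n _ => by
          simpa only [← range_eq_Ico, pow_zero] using
            geom_sum_Ico_le_of_lt_one (m := 0) (n := n + 1) hx0 hx1
    _ = ((m : ℝ) + 1) / (1 - x) := by
        rw [sum_const, card_range, nsmul_eq_mul]
        push_cast
        ring

-- Convex and `C¹` in `s > 0`, with `-∂ₛ = min (1/4) (c²/s²)`.
noncomputable def telescopingMajorant (c s : ℝ) : ℝ :=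
  if s ≤ 2 * c then c - s / 4 else c ^ 2 / s

lemma sq_le_telescopingMajorant_sub {c t y : ℝ} (hc : 0 ≤ c) (ht : 2 ≤ t) (hy0 : 0 ≤ y)
    (hy1 : y ≤ 1 / 2) (hyt : y * t ≤ c) :
    y ^ 2 ≤ telescopingMajorant c (t - 1) - telescopingMajorant c t := by
  have hyc : y ^ 2 ≤ c ^ 2 / t ^ 2 := by
    rw [le_div_iff₀ (by positivity), ← mul_pow]
    exact pow_le_pow_left₀ (by positivity) hyt 2
  unfold telescopingMajorant
  split_ifs with h1 h2 h2
  · nlinarith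
  · have hδ : 0 ≤ t - 2 * c := by linarith
    -- with `δ = t - 2c ∈ [0, 1]` the difference of the two sides is `δ t (1 - δ) + 2 c δ`
    have key : c ^ 2 * t + c ^ 2 ≤ (c - (t - 1) / 4) * t ^ 2 := by
      nlinarith [mul_nonneg (mul_nonneg hδ (by linarith : (0 : ℝ) ≤ t))
        (by linarith : (0 : ℝ) ≤ 1 - (t - 2 * c)), mul_nonneg hδ hc]
    have h3 : c ^ 2 / t + c ^ 2 / t ^ 2 ≤ c - (t - 1) / 4 := by
      rw [div_add_div _ _ (by positivity) (by positivity), div_le_iff₀ (by positivity)]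
      nlinarith
    linarith
  · linarith
  · calc y ^ 2 ≤ c ^ 2 / t ^ 2 := hyc
      _ ≤ c ^ 2 / ((t - 1) * t) :=
        div_le_div_of_nonneg_left (sq_nonneg c) (by nlinarith) (by nlinarith)
      _ = c ^ 2 / (t - 1) - c ^ 2 / t := by
        field_simp [(by linarith : t - 1 ≠ 0), (by linarith : t ≠ 0)]
        ring

lemma sum_range_sq_le_of_le_half_of_mul_le {c : ℝ} (hc : 0 ≤ c) {y : ℕ → ℝ}
    (hy0 : ∀ m, 0 ≤ y m) (hy1 : ∀ m, y m ≤ 1 / 2) (hy2 : ∀ m : ℕ, y m * ((m : ℝ) + 2) ≤ c)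
    (N : ℕ) : ∑ m ∈ range N, y m ^ 2 ≤ c := by
  set F : ℕ → ℝ := fun m => telescopingMajorant c ((m : ℝ) + 1) with hF
  have hF0 : F 0 ≤ c := by
    simp only [hF, telescopingMajorant, Nat.cast_zero, zero_add]
    split_ifs <;> nlinarith
  have hFN : 0 ≤ F N := by
    simp only [hF, telescopingMajorant]
    split_ifs <;> first | linarith | positivity
  calc ∑ m ∈ range N, y m ^ 2 ≤ ∑ m ∈ range N, (F m - F (m + 1)) :=
        sum_le_sum fun m _ => by
          have := sq_le_telescopingMajorant_sub hc (by linarith [m.cast_nonneg (α := ℝ)])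
            (hy0 m) (hy1 m) (hy2 m)
          rw [show (m : ℝ) + 2 - 1 = m + 1 by ring, show (m : ℝ) + 2 = m + 1 + 1 by ring] at this
          simpa only [hF, Nat.cast_succ] using this
    _ = F 0 - F N := sum_range_sub' F N
    _ ≤ c := by linarith

lemma sum_range_sq_phiCoeff_sq_mul_doubleGeomSum_le {x : ℝ} (hx0 : 0 ≤ x) (hx1 : x < 1)
    (N : ℕ) : ∑ m ∈ range N, (phiCoeff m ^ 2 * doubleGeomSum x m) ^ 2 ≤ 1 / (1 - x) := by
  refine sum_range_sq_le_of_le_half_of_mul_le (one_div_nonneg.2 (by linarith))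
    (fun m => mul_nonneg (sq_nonneg _) (doubleGeomSum_nonneg hx0 m)) (fun m => ?_) (fun m => ?_) N
  · rw [phiCoeff_sq, one_div_mul_eq_div, div_le_iff₀ (by positivity)]
    linarith [doubleGeomSum_le_of_le_one hx0 hx1.le m]
  · have hcancel : 1 / (((m : ℝ) + 1) * ((m : ℝ) + 2)) * doubleGeomSum x m * ((m : ℝ) + 2) =
        doubleGeomSum x m / ((m : ℝ) + 1) := by
      field_simp
    rw [phiCoeff_sq, hcancel, div_le_iff₀ (by positivity), one_div_mul_eq_div]
    exact doubleGeomSum_le_of_lt_one hx0 hx1 m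

lemma sum_range_ite_pow_sub_le {r : ℝ} (hr0 : 0 ≤ r) (hr1 : r < 1) (l N : ℕ) :
    ∑ k ∈ range N, (if l ≤ k then r ^ (k - l) else 0) ≤ 1 / (1 - r) := by
  rw [← sum_filter, range_eq_Ico, Ico_filter_le, max_eq_right l.zero_le, sum_Ico_eq_sum_range]
  simpa only [Nat.add_sub_cancel_left, ← range_eq_Ico, pow_zero] using
    geom_sum_Ico_le_of_lt_one (m := 0) (n := N - l) hr0 hr1

lemma sum_range_sum_range_ite_pow_mul_le {r C : ℝ} (hr0 : 0 ≤ r) (hr1 : r < 1) {f : ℕ → ℝ}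
    (hf : ∀ m, 0 ≤ f m) (hC : ∀ N, ∑ m ∈ range N, f m ≤ C) (N : ℕ) :
    ∑ k ∈ range N, ∑ l ∈ range N, (if l ≤ k then r ^ (k - l) * f l else 0) ≤ C / (1 - r) := by
  rw [sum_comm]
  calc ∑ l ∈ range N, ∑ k ∈ range N, (if l ≤ k then r ^ (k - l) * f l else 0)
      ≤ ∑ l ∈ range N, 1 / (1 - r) * f l := sum_le_sum fun l _ => by
        simp only [← ite_zero_mul, ← sum_mul]
        exact mul_le_mul_of_nonneg_right (sum_range_ite_pow_sub_le hr0 hr1 l N) (hf l)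
    _ ≤ C / (1 - r) := by
        rw [← mul_sum, one_div_mul_eq_div]
        exact div_le_div_of_nonneg_right (hC N) (by linarith)

lemma tsum_le_of_sum_range_prod_le {f : ℕ × ℕ → ℝ} {C : ℝ} (hf : ∀ q, 0 ≤ f q)
    (h : ∀ N, ∑ q ∈ range N ×ˢ range N, f q ≤ C) : ∑' q, f q ≤ C := by
  refine tsum_le_of_sum_le' (by simpa using h 0) fun s => ?_
  obtain ⟨N, hN⟩ := exists_nat_subset_range (s.image Prod.fst ∪ s.image Prod.snd)
  have hs : s ⊆ range N ×ˢ range N :=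
    subset_product.trans (product_subset_product (union_subset_left hN) (union_subset_right hN))
  exact (sum_le_sum_of_subset_of_nonneg hs fun q _ _ => hf q).trans (h N)

lemma inner_eq_phiCoeff_mul_innerKernel (a b : ℂ) (k l : ℕ) :
    ∑' p : ℕ × ℕ, wSide b k p * conj (zSide a l p) =
      phiCoeff k * phiCoeff l * innerKernel a (conj b) k l := by
  have hvanish : ∀ p ∉ range (k + 2) ×ˢ range (l + 2), wSide b k p * conj (zSide a l p) = 0 := by
    rintro ⟨i, j⟩ hp
    rw [mem_product, mem_range, mem_range, not_and_or, not_lt, not_lt] at hp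
    rcases hp with hi | hj
    · obtain ⟨i, rfl⟩ := Nat.exists_eq_add_of_le' (by omega : 1 ≤ i)
      rw [wSide_succ_of_lt b j (by omega), zero_mul]
    · obtain ⟨j, rfl⟩ := Nat.exists_eq_add_of_le' (by omega : 1 ≤ j)
      rw [zSide_apply, wSide_succ_of_lt a i (by omega), map_zero, mul_zero]
  rw [tsum_eq_sum hvanish, sum_product, sum_range_succ', innerKernel, mul_sum]
  simp only [zSide_apply, wSide_zero_right, map_zero, mul_zero, sum_const_zero, add_zero]
  refine sum_congr rfl fun i hi => ?_
  rw [sum_range_succ', wSide_zero_right, zero_mul, add_zero, mul_sum]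
  refine sum_congr rfl fun j hj => ?_
  rw [mem_range] at hi hj
  rw [wSide_succ_succ _ _ (by omega), wSide_succ_succ _ _ (by omega), add_comm j i]
  rw [apply_ite conj, map_zero, ite_zero_mul_ite_zero, mul_ite, mul_zero]
  simp only [max_le_iff]
  refine if_congr Iff.rfl ?_ rfl
  simp only [map_mul, map_pow, Complex.conj_ofReal, Complex.conj_conj]
  ring

lemma phiCoeff_mul_norm_innerKernel_le (x y : ℂ) {k l : ℕ} (h : l ≤ k) :
    phiCoeff k * phiCoeff l * ‖innerKernel x y k l‖ ≤
      ‖x‖ ^ (k - l) * (phiCoeff l ^ 2 * doubleGeomSum (‖x‖ * ‖y‖) l) := by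
  rw [innerKernel_of_le x y h, norm_mul, norm_pow, ← norm_mul]
  have hphi : phiCoeff k * phiCoeff l ≤ phiCoeff l ^ 2 := by
    rw [sq]
    exact mul_le_mul_of_nonneg_right (phiCoeff_antitone h) (phiCoeff_nonneg l)
  calc phiCoeff k * phiCoeff l * (‖x‖ ^ (k - l) * ‖doubleGeomSum (x * y) l‖)
      ≤ phiCoeff l ^ 2 * (‖x‖ ^ (k - l) * doubleGeomSum ‖x * y‖ l) :=
        mul_le_mul hphi (mul_le_mul_of_nonneg_left (norm_doubleGeomSum_le _ _) (by positivity))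
          (by positivity) (by positivity)
    _ = _ := by rw [norm_mul]; ring

lemma norm_inner_sq_le (a b : ℂ) (k l : ℕ) :
    ‖∑' p : ℕ × ℕ, wSide b k p * conj (zSide a l p)‖ ^ 2 ≤
      (if l ≤ k then (‖a‖ ^ 2) ^ (k - l) *
          (phiCoeff l ^ 2 * doubleGeomSum (‖a‖ * ‖b‖) l) ^ 2 else 0) +
        (if k ≤ l then (‖b‖ ^ 2) ^ (l - k) *
          (phiCoeff k ^ 2 * doubleGeomSum (‖a‖ * ‖b‖) k) ^ 2 else 0) := by
  have hphi := mul_nonneg (phiCoeff_nonneg k) (phiCoeff_nonneg l)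
  rw [inner_eq_phiCoeff_mul_innerKernel, ← Complex.ofReal_mul, norm_mul, Complex.norm_real,
    Real.norm_of_nonneg hphi]
  rcases le_total l k with h | h
  · calc _ ≤ (‖a‖ ^ (k - l) * (phiCoeff l ^ 2 * doubleGeomSum (‖a‖ * ‖b‖) l)) ^ 2 := by
          refine pow_le_pow_left₀ (mul_nonneg hphi (norm_nonneg _)) ?_ 2
          simpa using phiCoeff_mul_norm_innerKernel_le a (conj b) h
      _ ≤ _ := by
          rw [if_pos h, mul_pow, ← pow_mul, mul_comm (k - l), pow_mul]
          exact le_add_of_nonneg_right (by split_ifs <;> positivity)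
  · calc _ ≤ (‖b‖ ^ (l - k) * (phiCoeff k ^ 2 * doubleGeomSum (‖b‖ * ‖a‖) k)) ^ 2 := by
          rw [innerKernel_comm, mul_comm (phiCoeff k)]
          refine pow_le_pow_left₀ (mul_nonneg (by rwa [mul_comm]) (norm_nonneg _)) ?_ 2
          simpa using phiCoeff_mul_norm_innerKernel_le (conj b) a h
      _ ≤ _ := by
          rw [if_pos h, mul_comm ‖b‖ ‖a‖, mul_pow, ← pow_mul, mul_comm (l - k), pow_mul]
          exact le_add_of_nonneg_left (by split_ifs <;> positivity)

lemma tsum_norm_inner_sq_le {a b : ℂ} (ha : ‖a‖ < 1) (hb : ‖b‖ < 1) :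
    ∑' q : ℕ × ℕ, ‖∑' p : ℕ × ℕ, wSide b q.1 p * conj (zSide a q.2 p)‖ ^ 2 ≤
      1 / (1 - ‖a‖ * ‖b‖) / (1 - ‖a‖ ^ 2) + 1 / (1 - ‖a‖ * ‖b‖) / (1 - ‖b‖ ^ 2) := by
  have hab0 : 0 ≤ ‖a‖ * ‖b‖ := by positivity
  have hab1 : ‖a‖ * ‖b‖ < 1 := by nlinarith [norm_nonneg a, norm_nonneg b]
  have hdiag := sum_range_sq_phiCoeff_sq_mul_doubleGeomSum_le hab0 hab1
  have hdiag0 : ∀ m, 0 ≤ (phiCoeff m ^ 2 * doubleGeomSum (‖a‖ * ‖b‖) m) ^ 2 := fun m => sq_nonneg _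
  refine tsum_le_of_sum_range_prod_le (fun q => sq_nonneg _) fun N => ?_
  rw [sum_product]
  refine (sum_le_sum fun k _ => sum_le_sum fun l _ => norm_inner_sq_le a b k l).trans ?_
  simp only [sum_add_distrib]
  refine add_le_add (sum_range_sum_range_ite_pow_mul_le (sq_nonneg _) ?_ hdiag0 hdiag N) ?_
  · nlinarith [norm_nonneg a]
  · rw [sum_comm]
    exact sum_range_sum_range_ite_pow_mul_le (sq_nonneg _) (by nlinarith [norm_nonneg b])
      hdiag0 hdiag N

theorem stmt_17 (a b : ℂ) (ha : ‖a‖ < 1) (hb : ‖b‖ < 1) :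
    Sigma1 a b ≤ 2 := by
  have hu : 0 < 1 - ‖a‖ ^ 2 := by nlinarith [norm_nonneg a]
  have hv : 0 < 1 - ‖b‖ ^ 2 := by nlinarith [norm_nonneg b]
  have huv : 0 < 1 - ‖a‖ * ‖b‖ := by nlinarith [norm_nonneg a, norm_nonneg b]
  calc Sigma1 a b ≤ (1 - ‖a‖ ^ 2) * (1 - ‖b‖ ^ 2) *
        (1 / (1 - ‖a‖ * ‖b‖) / (1 - ‖a‖ ^ 2) + 1 / (1 - ‖a‖ * ‖b‖) / (1 - ‖b‖ ^ 2)) := by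
        unfold Sigma1
        gcongr
        exact tsum_norm_inner_sq_le ha hb
    _ = (2 - ‖a‖ ^ 2 - ‖b‖ ^ 2) / (1 - ‖a‖ * ‖b‖) := by
        field_simp
        ring
    _ ≤ 2 := by
        rw [div_le_iff₀ huv]
        nlinarith [sq_nonneg (‖a‖ - ‖b‖)]
end

section
/- Let $\theta$ be an inner function on the unit disk and let $w \in \mathbb{D}$ with $w \ne \theta(0)$. Then Littlewood's inequality holds: the Nevanlinna counting function satisfies $N_\theta(w) \le \log \left| \frac{1 - \overline{\theta(0)} w}{\theta(0) - w} \right|$, where $N_\theta(w) = \sum_j \log \frac{1}{|z_j|}$, the sum taken over the solutions $z_j \in \mathbb{D}$ of $\theta(z) = w$ counted with multiplicity (and $N_\theta(w) = 0$ if $w \notin \theta(\mathbb{D})$). -/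
/-!
Composing `θ` with the disk automorphism `z ↦ (z - w) / (1 - w̄ z)` gives an analytic self-map `g`
of the disk whose zeros are the solutions of `θ = w`, with the same multiplicities, and with
`1 / |g 0| = |(1 - conj (θ 0) w) / (θ 0 - w)|`. On a circle of radius `r < 1` Jensen's formula,
together with `log |g| ≤ 0`, bounds `∑ ord_u g · log (r / |u|)` over the zeros `|u| ≤ r` by
`log (1 / |g 0|)`. For any finite set of zeros, letting `r → 1` gives the bound for the sum of
`ord_u g · log (1 / |u|)`, and the terms are nonnegative, so it also bounds the full series.
-/

open ComplexConjugate Metric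

open Filter Function MeromorphicOn Real Set Topology

lemma Complex.normSq_one_sub_conj_mul_sub_normSq_sub (a z : ℂ) :
    normSq (1 - conj a * z) - normSq (z - a) = (1 - normSq a) * (1 - normSq z) := by
  simp only [normSq_apply, sub_re, sub_im, one_re, one_im, mul_re, mul_im, conj_re, conj_im]
  ring

lemma Complex.norm_sub_le_norm_one_sub_conj_mul {a z : ℂ} (ha : ‖a‖ ≤ 1) (hz : ‖z‖ ≤ 1) :
    ‖z - a‖ ≤ ‖1 - conj a * z‖ := by
  have key := normSq_one_sub_conj_mul_sub_normSq_sub a z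
  simp only [normSq_eq_norm_sq] at key
  have hprod : 0 ≤ (1 - ‖a‖ ^ 2) * (1 - ‖z‖ ^ 2) :=
    mul_nonneg (by nlinarith [norm_nonneg a]) (by nlinarith [norm_nonneg z])
  exact (pow_le_pow_iff_left₀ (norm_nonneg _) (norm_nonneg _) two_ne_zero).mp (by linarith)

lemma Complex.one_sub_conj_mul_ne_zero {a z : ℂ} (ha : ‖a‖ < 1) (hz : ‖z‖ ≤ 1) :
    1 - conj a * z ≠ 0 := by
  have hlt : ‖conj a * z‖ < 1 := by
    rw [norm_mul, norm_conj]
    exact mul_lt_one_of_nonneg_of_lt_one_left (norm_nonneg a) ha hz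
  intro h
  rw [sub_eq_zero] at h
  simp [← h] at hlt

lemma Complex.norm_sub_div_one_sub_conj_mul_le_one {a z : ℂ} (ha : ‖a‖ < 1) (hz : ‖z‖ ≤ 1) :
    ‖(z - a) / (1 - conj a * z)‖ ≤ 1 := by
  rw [norm_div]
  exact div_le_one_of_le₀ (norm_sub_le_norm_one_sub_conj_mul ha.le hz) (norm_nonneg _)

lemma Complex.norm_one_sub_conj_mul_comm (a b : ℂ) : ‖1 - conj a * b‖ = ‖1 - conj b * a‖ := by
  rw [← norm_conj]
  simp [mul_comm]

lemma analyticOrderAt_div_of_ne_zero {𝕜 : Type*} [NontriviallyNormedField 𝕜] {f u : 𝕜 → 𝕜}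
    {z : 𝕜} (hf : AnalyticAt 𝕜 f z) (hu : AnalyticAt 𝕜 u z) (hu0 : u z ≠ 0) :
    analyticOrderAt (f / u) z = analyticOrderAt f z := by
  rw [div_eq_mul_inv, analyticOrderAt_mul hf (hu.inv hu0),
    (analyticOrderAt_eq_zero (f := u⁻¹)).mpr (Or.inr (inv_ne_zero hu0)), add_zero]

lemma AnalyticOnNhd.divisor_eq_analyticOrderNatAt {𝕜 E : Type*} [NontriviallyNormedField 𝕜]
    [NormedAddCommGroup E] [NormedSpace 𝕜 E] {f : 𝕜 → E} {U : Set 𝕜} {z : 𝕜}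
    (hf : AnalyticOnNhd 𝕜 f U) (hz : z ∈ U) :
    divisor f U z = analyticOrderNatAt f z := by
  rw [hf.divisor_apply hz, analyticOrderNatAt]
  cases analyticOrderAt f z <;> simp

lemma log_mul_inv_norm_sub_nonneg {c u : ℂ} {R : ℝ} (hu : u ∈ closedBall c R) :
    0 ≤ Real.log (R * ‖c - u‖⁻¹) := by
  rcases eq_or_ne u c with rfl | hne
  · simp
  · rw [← div_eq_mul_inv]
    refine log_nonneg ((one_le_div (norm_pos_iff.mpr (sub_ne_zero.mpr hne.symm))).mpr ?_)
    rwa [mem_closedBall, dist_eq_norm, norm_sub_rev] at hu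

theorem AnalyticOnNhd.finsum_divisor_mul_log_le {c : ℂ} {R : ℝ} {f : ℂ → ℂ} (hR : 0 < R)
    (hf : AnalyticOnNhd ℂ f (closedBall c R)) (hfc : f c ≠ 0)
    (hf_le : ∀ z ∈ sphere c R, ‖f z‖ ≤ 1) :
    ∑ᶠ u, (divisor f (closedBall c R) u : ℝ) * Real.log (R * ‖c - u‖⁻¹) ≤ Real.log ‖f c‖⁻¹ := by
  rw [← abs_of_pos hR] at hf
  have jensen := hf.circleAverage_log_norm hR.ne' hfc
  rw [abs_of_pos hR] at jensen
  have hav : circleAverage (fun z ↦ Real.log ‖f z‖) c R ≤ 0 := by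
    refine circleAverage_mono_on_of_le_circle ?_ fun z hz ↦ ?_
    · exact (hf.mono sphere_subset_closedBall).meromorphicOn
        |>.circleIntegrable_log_norm
    · rw [abs_of_pos hR] at hz
      exact log_nonpos (norm_nonneg _) (hf_le z hz)
  rw [log_inv]
  linarith

theorem AnalyticOnNhd.sum_analyticOrderNatAt_mul_log_le {c : ℂ} {R : ℝ} {f : ℂ → ℂ}
    (hR : 0 < R) (hf : AnalyticOnNhd ℂ f (closedBall c R)) (hfc : f c ≠ 0)
    (hf_le : ∀ z ∈ sphere c R, ‖f z‖ ≤ 1) {s : Finset ℂ} (hs : ↑s ⊆ closedBall c R) :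
    ∑ u ∈ s, (analyticOrderNatAt f u : ℝ) * Real.log (R * ‖c - u‖⁻¹) ≤ Real.log ‖f c‖⁻¹ := by
  set D := divisor f (closedBall c R)
  have hD : D.support.Finite := D.finiteSupport (isCompact_closedBall c R)
  have hterm : ∀ u, 0 ≤ (D u : ℝ) * Real.log (R * ‖c - u‖⁻¹) := by
    intro u
    by_cases hu : u ∈ closedBall c R
    · exact mul_nonneg (mod_cast hf.divisor_nonneg u) (log_mul_inv_norm_sub_nonneg hu)
    · simp [D, hu]
  calc ∑ u ∈ s, (analyticOrderNatAt f u : ℝ) * Real.log (R * ‖c - u‖⁻¹)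
      = ∑ u ∈ s, (D u : ℝ) * Real.log (R * ‖c - u‖⁻¹) := by
        refine Finset.sum_congr rfl fun u hu ↦ ?_
        rw [hf.divisor_eq_analyticOrderNatAt (hs hu), Int.cast_natCast]
    _ ≤ ∑ u ∈ s ∪ hD.toFinset, (D u : ℝ) * Real.log (R * ‖c - u‖⁻¹) :=
        Finset.sum_le_sum_of_subset_of_nonneg Finset.subset_union_left fun u _ _ ↦ hterm u
    _ = ∑ᶠ u, (D u : ℝ) * Real.log (R * ‖c - u‖⁻¹) := by
        refine (finsum_eq_sum_of_support_subset _ fun u hu ↦ ?_).symm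
        simp_all
    _ ≤ Real.log ‖f c‖⁻¹ := hf.finsum_divisor_mul_log_le hR hfc hf_le

theorem AnalyticOnNhd.sum_analyticOrderNatAt_mul_log_le_of_mapsTo_ball {c : ℂ} {R : ℝ}
    {f : ℂ → ℂ} (hR : 0 < R) (hf : AnalyticOnNhd ℂ f (ball c R))
    (hf_maps : MapsTo f (ball c R) (closedBall 0 1)) (hfc : f c ≠ 0) {s : Finset ℂ}
    (hs : ↑s ⊆ ball c R) :
    ∑ u ∈ s, (analyticOrderNatAt f u : ℝ) * Real.log (R * ‖c - u‖⁻¹) ≤ Real.log ‖f c‖⁻¹ := by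
  obtain ⟨r₀, hr₀R, hs₀⟩ := exists_lt_subset_ball s.finite_toSet.isClosed hs
  have hlim : Tendsto (fun r ↦ ∑ u ∈ s, (analyticOrderNatAt f u : ℝ) * Real.log (r * ‖c - u‖⁻¹))
      (𝓝[<] R) (𝓝 (∑ u ∈ s, (analyticOrderNatAt f u : ℝ) * Real.log (R * ‖c - u‖⁻¹))) := by
    refine tendsto_finsetSum s fun u _ ↦ ?_
    rcases eq_or_ne u c with rfl | hne
    · simp
    · have hRu : R * ‖c - u‖⁻¹ ≠ 0 := by simp [hR.ne', sub_ne_zero.mpr hne.symm]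
      exact (((tendsto_id.mono_left nhdsWithin_le_nhds).mul_const _).log hRu).const_mul _
  refine le_of_tendsto hlim ?_
  filter_upwards [Ioo_mem_nhdsLT (max_lt hr₀R hR)] with r ⟨hr₀r, hrR⟩
  have hr : 0 < r := (le_max_right _ _).trans_lt hr₀r
  refine (hf.mono (closedBall_subset_ball hrR)).sum_analyticOrderNatAt_mul_log_le hr hfc
    (fun z hz ↦ ?_) (hs₀.trans ((ball_subset_ball ((le_max_left _ _).trans hr₀r.le)).trans
      ball_subset_closedBall))
  exact mem_closedBall_zero_iff.mp (hf_maps (sphere_subset_ball hrR hz))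

theorem AnalyticOnNhd.tsum_analyticOrderNatAt_mul_log_le {c : ℂ} {R : ℝ} {f : ℂ → ℂ}
    (hR : 0 < R) (hf : AnalyticOnNhd ℂ f (ball c R))
    (hf_maps : MapsTo f (ball c R) (closedBall 0 1)) (hfc : f c ≠ 0) :
    ∑' u : ball c R, (analyticOrderNatAt f u : ℝ) * Real.log (R * ‖c - u‖⁻¹) ≤
      Real.log ‖f c‖⁻¹ := by
  have hsum : ∀ s : Finset (ball c R),
      ∑ u ∈ s, (analyticOrderNatAt f u : ℝ) * Real.log (R * ‖c - u‖⁻¹) ≤ Real.log ‖f c‖⁻¹ := by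
    intro s
    simpa using hf.sum_analyticOrderNatAt_mul_log_le_of_mapsTo_ball hR hf_maps hfc
      (s := s.map (Embedding.subtype _)) (by simp)
  have hnonneg : ∀ u : ball c R,
      0 ≤ (analyticOrderNatAt f u : ℝ) * Real.log (R * ‖c - u‖⁻¹) := fun u ↦
    mul_nonneg (Nat.cast_nonneg _) (log_mul_inv_norm_sub_nonneg (ball_subset_closedBall u.2))
  exact (summable_of_sum_le hnonneg hsum).tsum_le_of_sum_le hsum

theorem stmt_19_general (θ : ℂ → ℂ)
    (hθa : ∀ z ∈ ball (0 : ℂ) 1, AnalyticAt ℂ θ z)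
    (hθm : Set.MapsTo θ (ball (0 : ℂ) 1) (closedBall (0 : ℂ) 1))
    (w : ℂ) (hw : ‖w‖ < 1) (hw0 : w ≠ θ 0)
    -- `m z` is the multiplicity of `z` as a solution of `θ(z) = w`,
    -- i.e. the order of vanishing of `θ - w` at `z`:
    (m : ↥(ball (0 : ℂ) 1) → ℕ)
    (hm : ∀ z : ↥(ball (0 : ℂ) 1),
      (m z : ℕ∞) = analyticOrderAt (θ - fun _ => w) (z : ℂ)) :
    -- Littlewood's inequality for the Nevanlinna counting function
    -- `N_θ(w) = ∑_j log (1/|z_j|)`: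
    ∑' z : ↥(ball (0 : ℂ) 1), (m z : ℝ) * Real.log (1 / ‖(z : ℂ)‖) ≤
      Real.log ‖(1 - conj (θ 0) * w) / (θ 0 - w)‖ := by
  set g : ℂ → ℂ := (θ - fun _ ↦ w) / fun z ↦ 1 - conj w * θ z
  have hden : ∀ z ∈ ball (0 : ℂ) 1, 1 - conj w * θ z ≠ 0 := fun z hz ↦
    Complex.one_sub_conj_mul_ne_zero hw (mem_closedBall_zero_iff.mp (hθm hz))
  have hga : AnalyticOnNhd ℂ g (ball 0 1) := fun z hz ↦
    ((hθa z hz).sub analyticAt_const).div (analyticAt_const.sub (analyticAt_const.mul (hθa z hz)))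
      (hden z hz)
  have hgm : MapsTo g (ball 0 1) (closedBall 0 1) := fun z hz ↦ by
    simpa [g] using Complex.norm_sub_div_one_sub_conj_mul_le_one hw
      (mem_closedBall_zero_iff.mp (hθm hz))
  have hg0 : g 0 ≠ 0 := div_ne_zero (sub_ne_zero.mpr hw0.symm) (hden 0 (mem_ball_self one_pos))
  have hmg : ∀ z : ball (0 : ℂ) 1, m z = analyticOrderNatAt g z := fun z ↦ by
    rw [analyticOrderNatAt, analyticOrderAt_div_of_ne_zero (u := fun z ↦ 1 - conj w * θ z)
      ((hθa z z.2).sub analyticAt_const)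
      (analyticAt_const.sub (analyticAt_const.mul (hθa z z.2))) (hden z z.2), ← hm z,
      ENat.toNat_natCast]
  have hrhs : ‖(1 - conj (θ 0) * w) / (θ 0 - w)‖ = ‖g 0‖⁻¹ := by
    simp [g, Complex.norm_one_sub_conj_mul_comm]
  rw [hrhs]
  simpa [hmg] using hga.tsum_analyticOrderNatAt_mul_log_le one_pos hgm hg0

theorem stmt_19 (θ : ℂ → ℂ)
    (hθa : ∀ z ∈ ball (0 : ℂ) 1, AnalyticAt ℂ θ z)
    (hθm : Set.MapsTo θ (ball (0 : ℂ) 1) (closedBall (0 : ℂ) 1))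
    -- `θ` is inner: radial boundary values of modulus one almost everywhere
    (hθinner : ∀ᵐ t : ℝ,
      Filter.Tendsto (fun r : ℝ => ‖θ ((r : ℂ) * Complex.exp (t * Complex.I))‖)
        (nhdsWithin 1 (Set.Iio 1)) (nhds 1))
    (w : ℂ) (hw : ‖w‖ < 1) (hw0 : w ≠ θ 0)
    -- `m z` is the multiplicity of `z` as a solution of `θ(z) = w`,
    -- i.e. the order of vanishing of `θ - w` at `z`:
    (m : ↥(ball (0 : ℂ) 1) → ℕ)
    (hm : ∀ z : ↥(ball (0 : ℂ) 1),
      (m z : ℕ∞) = analyticOrderAt (θ - fun _ => w) (z : ℂ)) :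
    -- Littlewood's inequality for the Nevanlinna counting function
    -- `N_θ(w) = ∑_j log (1/|z_j|)`:
    ∑' z : ↥(ball (0 : ℂ) 1), (m z : ℝ) * Real.log (1 / ‖(z : ℂ)‖) ≤
      Real.log ‖(1 - conj (θ 0) * w) / (θ 0 - w)‖ :=
  stmt_19_general θ hθa hθm w hw hw0 m hm
end
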